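/- Let ρ be holomorphic near 0 in ℂ² with ρ₀₀ = ρ₁₀ = ρ₀₁ = ρ₂₀ = ρ₁₁ = 0 and ρ₀₂ ≠ 0, and suppose the quantities 𝒜₃^ρ = ρ₃₀ and 𝒜₄^ρ = ρ₄₀ − 3ρ₂₁²/ρ₀₂ both vanish. Then 𝒜₅^ρ := ρ₅₀ − 10ρ₂₁ρ₃₁/ρ₀₂ + 15ρ₁₂ρ₂₁²/ρ₀₂² satisfies: for any holomorphic function τ near 0 with τ(0,0) ≠ 0, 𝒜₅^{τρ} = τ(0,0)·𝒜₅^ρ. -/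

import Mathlib

/-!
STATEMENT 4: Let ρ be holomorphic near 0 in ℂ² with ρ₀₀ = ρ₁₀ = ρ₀₁ = ρ₂₀ = ρ₁₁ = 0 and
ρ₀₂ ≠ 0, and suppose 𝒜₃^ρ = ρ₃₀ and 𝒜₄^ρ = ρ₄₀ − 3ρ₂₁²/ρ₀₂ both vanish.  Then
𝒜₅^ρ := ρ₅₀ − 10ρ₂₁ρ₃₁/ρ₀₂ + 15ρ₁₂ρ₂₁²/ρ₀₂² satisfies 𝒜₅^{τρ} = τ(0,0)·𝒜₅^ρ for any
holomorphic τ near 0 with τ(0,0) ≠ 0.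
-/

/-- `pd i j f` is the partial derivative `∂^{i+j} f / ∂x^i ∂y^j` at the origin of `ℂ²`. -/
noncomputable def pd (i j : ℕ) (f : ℂ × ℂ → ℂ) : ℂ :=
  iteratedDeriv i (fun x => iteratedDeriv j (fun y => f (x, y)) 0) 0

/-- The quantity `𝒜₅` of a function of two complex variables. -/
noncomputable def A5 (g : ℂ × ℂ → ℂ) : ℂ :=
  pd 5 0 g - 10 * pd 2 1 g * pd 3 1 g / pd 0 2 g
    + 15 * pd 1 2 g * (pd 2 1 g) ^ 2 / (pd 0 2 g) ^ 2

/-!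
By the Leibniz rule and the vanishing of ρ₀₀, ρ₁₀, ρ₀₁, ρ₂₀, ρ₁₁, ρ₃₀, the derivatives of τρ
entering 𝒜₅ are (τρ)₀₂ = τ₀₀ρ₀₂, (τρ)₂₁ = τ₀₀ρ₂₁, (τρ)₁₂ = τ₀₀ρ₁₂ + τ₁₀ρ₀₂,
(τρ)₃₁ = τ₀₀ρ₃₁ + 3τ₁₀ρ₂₁ and (τρ)₅₀ = τ₀₀ρ₅₀ + 5τ₁₀ρ₄₀, so that
𝒜₅^{τρ} = τ₀₀𝒜₅^ρ + 5τ₁₀𝒜₄^ρ.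

The Leibniz rule for the mixed derivatives at the origin needs x ↦ ∂ᵧʲf(x, 0) to be holomorphic:
the j-th derivative of the slice y ↦ f(x, y) is the slice of the j-th iterate of the partial
derivative in y, which preserves analyticity.
-/

open Filter Finset

section PartialDerivative

variable {𝕜 : Type*} [NontriviallyNormedField 𝕜]
  {F : Type*} [NormedAddCommGroup F] [NormedSpace 𝕜 F]

noncomputable def partialSnd (f : 𝕜 × 𝕜 → F) (p : 𝕜 × 𝕜) : F :=
  deriv (fun y => f (p.1, y)) p.2

lemma iteratedDeriv_slice_eq_iterate_partialSnd (f : 𝕜 × 𝕜 → F) (x : 𝕜) (j : ℕ) :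
    iteratedDeriv j (fun y => f (x, y)) = fun y => partialSnd^[j] f (x, y) := by
  induction j generalizing f with
  | zero => rfl
  | succ j ih => rw [iteratedDeriv_succ', Function.iterate_succ_apply]; exact ih (partialSnd f)

lemma AnalyticAt.partialSnd_eq_fderiv {f : 𝕜 × 𝕜 → F} {p : 𝕜 × 𝕜} (hf : AnalyticAt 𝕜 f p) :
    partialSnd f p = fderiv 𝕜 f p (0, 1) :=
  (hf.differentiableAt.hasFDerivAt.comp_hasDerivAt p.2
    ((hasDerivAt_const p.2 p.1).prodMk (hasDerivAt_id p.2))).deriv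

variable [CompleteSpace F] {U : Set (𝕜 × 𝕜)}

lemma AnalyticOnNhd.partialSnd (hU : IsOpen U) {f : 𝕜 × 𝕜 → F} (hf : AnalyticOnNhd 𝕜 f U) :
    AnalyticOnNhd 𝕜 (partialSnd f) U :=
  ((ContinuousLinearMap.apply 𝕜 F ((0 : 𝕜), (1 : 𝕜))).comp_analyticOnNhd hf.fderiv).congr hU
    fun p hp => ((hf p hp).partialSnd_eq_fderiv).symm

lemma AnalyticOnNhd.iterate_partialSnd (hU : IsOpen U) {f : 𝕜 × 𝕜 → F}
    (hf : AnalyticOnNhd 𝕜 f U) (j : ℕ) : AnalyticOnNhd 𝕜 (_root_.partialSnd^[j] f) U := by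
  induction j with
  | zero => exact hf
  | succ j ih => rw [Function.iterate_succ_apply']; exact AnalyticOnNhd.partialSnd hU ih

lemma AnalyticOnNhd.analyticAt_iteratedDeriv_slice (hU : IsOpen U) {f : 𝕜 × 𝕜 → F}
    (hf : AnalyticOnNhd 𝕜 f U) {x y : 𝕜} (hxy : (x, y) ∈ U) (j : ℕ) :
    AnalyticAt 𝕜 (fun x' => iteratedDeriv j (fun y' => f (x', y')) y) x := by
  simp only [iteratedDeriv_slice_eq_iterate_partialSnd]
  exact (hf.iterate_partialSnd hU j _ hxy).comp₂ analyticAt_id analyticAt_const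

end PartialDerivative

lemma pd_zero_zero (f : ℂ × ℂ → ℂ) : pd 0 0 f = f 0 := rfl

lemma pd_mul {U : Set (ℂ × ℂ)} (hU : IsOpen U) (h0U : (0 : ℂ × ℂ) ∈ U) {f g : ℂ × ℂ → ℂ}
    (hf : AnalyticOnNhd ℂ f U) (hg : AnalyticOnNhd ℂ g U) (i j : ℕ) :
    pd i j (fun p => f p * g p) = ∑ b ∈ range (j + 1), j.choose b *
      ∑ a ∈ range (i + 1), i.choose a * pd a b f * pd (i - a) (j - b) g := by
  have hslice : ∀ᶠ x in nhds (0 : ℂ), (x, (0 : ℂ)) ∈ U :=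
    (continuous_id.prodMk continuous_const).continuousAt.preimage_mem_nhds (hU.mem_nhds h0U)
  have hleibniz : (fun x => iteratedDeriv j (fun y => f (x, y) * g (x, y)) 0) =ᶠ[nhds 0]
      fun x => ∑ b ∈ range (j + 1), (j.choose b : ℂ) *
        (iteratedDeriv b (fun y => f (x, y)) 0 * iteratedDeriv (j - b) (fun y => g (x, y)) 0) := by
    filter_upwards [hslice] with x hx
    have hfx : AnalyticAt ℂ (fun y => f (x, y)) 0 := (hf _ hx).comp₂ analyticAt_const analyticAt_id
    have hgx : AnalyticAt ℂ (fun y => g (x, y)) 0 := (hg _ hx).comp₂ analyticAt_const analyticAt_id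
    simp only [iteratedDeriv_fun_mul hfx.contDiffAt hgx.contDiffAt, mul_assoc]
  have hf' := fun b => hf.analyticAt_iteratedDeriv_slice hU h0U b
  have hg' := fun b => hg.analyticAt_iteratedDeriv_slice hU h0U b
  rw [pd, hleibniz.iteratedDeriv_eq, iteratedDeriv_fun_sum
    fun b _ => (analyticAt_const.fun_mul ((hf' b).fun_mul (hg' (j - b)))).contDiffAt]
  refine sum_congr rfl fun b _ => ?_
  rw [iteratedDeriv_const_mul _ ((hf' b).fun_mul (hg' (j - b))).contDiffAt,
    iteratedDeriv_fun_mul (hf' b).contDiffAt (hg' (j - b)).contDiffAt]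
  rfl

noncomputable def A4 (g : ℂ × ℂ → ℂ) : ℂ :=
  pd 4 0 g - 3 * (pd 2 1 g) ^ 2 / pd 0 2 g

lemma A5_mul {U : Set (ℂ × ℂ)} (hU : IsOpen U) (h0U : (0 : ℂ × ℂ) ∈ U) {ρ τ : ℂ × ℂ → ℂ}
    (hρ : AnalyticOnNhd ℂ ρ U) (hτ : AnalyticOnNhd ℂ τ U)
    (h00 : pd 0 0 ρ = 0) (h10 : pd 1 0 ρ = 0) (h01 : pd 0 1 ρ = 0)
    (h20 : pd 2 0 ρ = 0) (h11 : pd 1 1 ρ = 0) (h02 : pd 0 2 ρ ≠ 0) (h30 : pd 3 0 ρ = 0)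
    (hτ0 : τ 0 ≠ 0) :
    A5 (fun p => τ p * ρ p) = τ 0 * A5 ρ + 5 * pd 1 0 τ * A4 ρ := by
  have hpd : ∀ i j, pd i j (fun p => τ p * ρ p) = _ := pd_mul hU h0U hτ hρ
  have e02 : pd 0 2 (fun p => τ p * ρ p) = τ 0 * pd 0 2 ρ := by
    simp [hpd, sum_range_succ, h00, h01, pd_zero_zero]
  have e21 : pd 2 1 (fun p => τ p * ρ p) = τ 0 * pd 2 1 ρ := by
    simp [hpd, sum_range_succ, h00, h10, h01, h20, h11, pd_zero_zero]
  have e12 : pd 1 2 (fun p => τ p * ρ p) = τ 0 * pd 1 2 ρ + pd 1 0 τ * pd 0 2 ρ := by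
    simp [hpd, sum_range_succ, h00, h10, h01, h11, pd_zero_zero]
  have e31 : pd 3 1 (fun p => τ p * ρ p) = τ 0 * pd 3 1 ρ + 3 * pd 1 0 τ * pd 2 1 ρ := by
    simp [hpd, sum_range_succ, h00, h10, h01, h20, h11, h30, pd_zero_zero]
  have e50 : pd 5 0 (fun p => τ p * ρ p) = τ 0 * pd 5 0 ρ + 5 * pd 1 0 τ * pd 4 0 ρ := by
    simp [hpd, sum_range_succ, h00, h10, h20, h30, pd_zero_zero]
  simp only [A5, A4, e02, e21, e12, e31, e50]
  field_simp
  ring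

theorem stmt_4 (U : Set (ℂ × ℂ)) (hU : IsOpen U) (h0U : (0 : ℂ × ℂ) ∈ U)
    (ρ τ : ℂ × ℂ → ℂ) (hρ : AnalyticOnNhd ℂ ρ U) (hτ : AnalyticOnNhd ℂ τ U)
    (h00 : pd 0 0 ρ = 0) (h10 : pd 1 0 ρ = 0) (h01 : pd 0 1 ρ = 0)
    (h20 : pd 2 0 ρ = 0) (h11 : pd 1 1 ρ = 0) (h02 : pd 0 2 ρ ≠ 0)
    (hA3 : pd 3 0 ρ = 0)
    (hA4 : pd 4 0 ρ - 3 * (pd 2 1 ρ) ^ 2 / pd 0 2 ρ = 0)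
    (hτ0 : τ 0 ≠ 0) :
    A5 (fun p => τ p * ρ p) = τ 0 * A5 ρ := by
  rw [A5_mul hU h0U hρ hτ h00 h10 h01 h20 h11 h02 hA3 hτ0, show A4 ρ = 0 from hA4, mul_zero,
    add_zero]
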